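/- Unconditional stability of the cubic trigonometric B-spline collocation scheme for the telegraph equation: let h ∈ (0, 2π/3), k > 0, α ≥ 0, β ∈ ℝ and 1/2 ≤ θ ≤ 1. Then for every φ ∈ ℝ, every complex number δ satisfying A(φ)·δ² − B(φ)·δ + C(φ) = 0 has |δ| ≤ 1. -/

import Mathlib

open Real

/-!
With `P = a2 + 2 a1 cos φ` and `Q = a6 + 2 a5 cos φ` (the symbols of the spline values and of
the second derivatives at the knots) and `R = β² P - Q`, the characteristic equation is
`((1 + 2αk) P + θk²R) δ² - ((2 + 2αk) P - (1 - θ) k²R) δ + P = 0`.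
For `0 < h < 2π/3` we have `γ = cos (h/2) > 1/2`, and in terms of `γ` one finds `P > 0` and
`Q ≤ 0`, the latter because `|3γ² - 1| ≤ 2γ³`. Hence `R ≥ 0`, and for `θ ≥ 1/2` the
coefficients `a δ² - b δ + c` satisfy `0 < a`, `c ≤ a`, `|b| ≤ a + c`. These force every root
into the closed unit disc: a real root `x` satisfies `(|x| - 1) (a |x| - c) ≤ 0`, and a
conjugate pair of roots has `|δ|² = c / a`.
-/

theorem norm_le_one_of_quadratic_eq_zero {a b c : ℝ} (ha : 0 < a) (hca : c ≤ a)
    (hb : |b| ≤ a + c) {δ : ℂ} (hδ : (a : ℂ) * δ ^ 2 - b * δ + c = 0) : ‖δ‖ ≤ 1 := by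
  have hre := congrArg Complex.re hδ
  have him := congrArg Complex.im hδ
  simp only [Complex.sub_re, Complex.add_re, Complex.mul_re, Complex.sub_im, Complex.add_im,
    Complex.mul_im, Complex.ofReal_re, Complex.ofReal_im, sq, Complex.zero_re,
    Complex.zero_im, zero_mul, sub_zero, add_zero] at hre him
  have hnorm : ‖δ‖ ^ 2 = δ.re ^ 2 + δ.im ^ 2 := by
    rw [Complex.sq_norm, Complex.normSq_apply]; ring
  have hcases : δ.im = 0 ∨ b = 2 * a * δ.re := by
    have : δ.im * (2 * a * δ.re - b) = 0 := by linear_combination him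
    rcases mul_eq_zero.mp this with him0 | hb0
    · exact Or.inl him0
    · exact Or.inr (by linarith)
  rcases hcases with hreal | hpair
  · have hx : ‖δ‖ = |δ.re| := by
      rw [← sq_eq_sq₀ (norm_nonneg _) (abs_nonneg _), hnorm, hreal, sq_abs]; ring
    have hbx : b * δ.re ≤ (a + c) * ‖δ‖ := by
      rw [hx]
      calc b * δ.re ≤ |b| * |δ.re| := by rw [← abs_mul]; exact le_abs_self _
        _ ≤ (a + c) * |δ.re| := by gcongr
    have hquad : a * ‖δ‖ ^ 2 + c = b * δ.re := by
      rw [hnorm]; linear_combination hre + 2 * a * δ.im * hreal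
    by_contra! hgt
    nlinarith [mul_pos (sub_pos.2 hgt) (by nlinarith : 0 < a * ‖δ‖ - c)]
  · have hprod : c = a * ‖δ‖ ^ 2 := by rw [hnorm]; subst hpair; linear_combination hre
    rw [← sq_le_one_iff₀ (norm_nonneg δ)]
    nlinarith

theorem norm_le_one_of_theta_scheme_eq_zero {m θ K P R : ℝ} (hm : 0 ≤ m) (hθl : 1 / 2 ≤ θ)
    (hK : 0 ≤ K) (hP : 0 < P) (hR : 0 ≤ R) {δ : ℂ}
    (hδ : (((1 + m) * P + θ * K * R : ℝ) : ℂ) * δ ^ 2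
      - (((2 + m) * P - (1 - θ) * K * R : ℝ) : ℂ) * δ + P = 0) : ‖δ‖ ≤ 1 := by
  have hKR : 0 ≤ K * R := mul_nonneg hK hR
  refine norm_le_one_of_quadratic_eq_zero (by nlinarith) (by nlinarith) ?_ hδ
  rw [abs_le]
  constructor <;> nlinarith

section HalfAngle

variable (h : ℝ)

theorem cos_eq_two_mul_cos_half_sq_sub_one : cos h = 2 * cos (h / 2) ^ 2 - 1 := by
  rw [← cos_two_mul, show 2 * (h / 2) = h by ring]

theorem sin_mul_sin_three_mul_half :
    sin h * sin (3 * h / 2) = 2 * sin (h / 2) ^ 2 * cos (h / 2) * (4 * cos (h / 2) ^ 2 - 1) := by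
  rw [show h = 2 * (h / 2) by ring, sin_two_mul, show 3 * (2 * (h / 2)) / 2 = 3 * (h / 2) by ring,
    sin_three_mul, show 2 * (h / 2) / 2 = h / 2 by ring]
  linear_combination (-8 * sin (h / 2) ^ 2 * cos (h / 2)) * sin_sq_add_cos_sq (h / 2)

theorem two_mul_cos_half_add_cos_three_mul_half :
    2 * cos (h / 2) + cos (3 * h / 2) = cos (h / 2) * (4 * cos (h / 2) ^ 2 - 1) := by
  rw [show 3 * h / 2 = 3 * (h / 2) by ring, cos_three_mul]; ring

end HalfAngle

theorem sin_half_pos_and_one_half_lt_cos_half {h : ℝ} (hh0 : 0 < h) (hh1 : h < 2 * π / 3) :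
    0 < sin (h / 2) ∧ 1 / 2 < cos (h / 2) := by
  refine ⟨sin_pos_of_pos_of_lt_pi (by positivity) (by linarith [pi_pos]), ?_⟩
  rw [← cos_pi_div_three]
  exact cos_lt_cos_of_nonneg_of_le_pi (by positivity) (by linarith [pi_pos]) (by linarith)

theorem abs_three_mul_sq_sub_one_le {c : ℝ} (hc : 1 / 2 ≤ c) : |3 * c ^ 2 - 1| ≤ 2 * c ^ 3 := by
  refine abs_le_of_sq_le_sq ?_ (by positivity)
  -- `(2 c³)² - (3 c² - 1)² = (c² - 1)² (4 c² - 1)`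
  nlinarith [mul_nonneg (sq_nonneg (c ^ 2 - 1)) (by nlinarith : (0 : ℝ) ≤ 4 * c ^ 2 - 1)]

theorem bspline_value_symbol_pos {h x : ℝ} (hh0 : 0 < h) (hh1 : h < 2 * π / 3) (hx : -1 ≤ x) :
    0 < 2 / (1 + 2 * cos h) + 2 * (sin (h / 2) ^ 2 / (sin h * sin (3 * h / 2))) * x := by
  obtain ⟨hs, hc⟩ := sin_half_pos_and_one_half_lt_cos_half hh0 hh1
  rw [cos_eq_two_mul_cos_half_sq_sub_one h, sin_mul_sin_three_mul_half]
  have hD : 0 < 4 * cos (h / 2) ^ 2 - 1 := by nlinarith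
  have key : 2 / (1 + 2 * (2 * cos (h / 2) ^ 2 - 1))
      + 2 * (sin (h / 2) ^ 2 / (2 * sin (h / 2) ^ 2 * cos (h / 2) * (4 * cos (h / 2) ^ 2 - 1))) * x
      = (2 * cos (h / 2) + x) / (cos (h / 2) * (4 * cos (h / 2) ^ 2 - 1)) := by
    field_simp
    ring
  rw [key]
  exact div_pos (by linarith) (by positivity)

theorem bspline_second_deriv_symbol_nonpos {h x : ℝ} (hh0 : 0 < h) (hh1 : h < 2 * π / 3)
    (hx : |x| ≤ 1) :
    -(3 * cos (h / 2) ^ 2) / (2 * sin (h / 2) ^ 2 * (1 + 2 * cos h))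
      + 2 * (3 * (1 + 3 * cos h) /
        (16 * sin (h / 2) ^ 2 * (2 * cos (h / 2) + cos (3 * h / 2)))) * x ≤ 0 := by
  obtain ⟨hs, hc⟩ := sin_half_pos_and_one_half_lt_cos_half hh0 hh1
  rw [two_mul_cos_half_add_cos_three_mul_half, cos_eq_two_mul_cos_half_sq_sub_one h]
  have hD : 0 < 4 * cos (h / 2) ^ 2 - 1 := by nlinarith
  have key : -(3 * cos (h / 2) ^ 2) / (2 * sin (h / 2) ^ 2 * (1 + 2 * (2 * cos (h / 2) ^ 2 - 1)))
      + 2 * (3 * (1 + 3 * (2 * cos (h / 2) ^ 2 - 1)) /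
        (16 * sin (h / 2) ^ 2 * (cos (h / 2) * (4 * cos (h / 2) ^ 2 - 1)))) * x
      = 3 * ((3 * cos (h / 2) ^ 2 - 1) * x - 2 * cos (h / 2) ^ 3)
        / (4 * sin (h / 2) ^ 2 * cos (h / 2) * (4 * cos (h / 2) ^ 2 - 1)) := by
    field_simp
    ring
  have hnum : (3 * cos (h / 2) ^ 2 - 1) * x ≤ 2 * cos (h / 2) ^ 3 :=
    calc (3 * cos (h / 2) ^ 2 - 1) * x ≤ |3 * cos (h / 2) ^ 2 - 1| * |x| := by
          rw [← abs_mul]; exact le_abs_self _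
      _ ≤ 2 * cos (h / 2) ^ 3 * 1 := by
          gcongr
          exact abs_three_mul_sq_sub_one_le hc.le
      _ = 2 * cos (h / 2) ^ 3 := mul_one _
  rw [key]
  exact div_nonpos_of_nonpos_of_nonneg (by linarith) (by positivity)

theorem stmt_19_general (h k α β θ : ℝ) (hh0 : 0 < h) (hh1 : h < 2 * Real.pi / 3)
    (a1 a2 a5 a6 w1 w2 w3 w4 : ℝ)
    (ha1 : a1 = Real.sin (h / 2) ^ 2 / (Real.sin h * Real.sin (3 * h / 2)))
    (ha2 : a2 = 2 / (1 + 2 * Real.cos h))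
    (ha5 : a5 = 3 * (1 + 3 * Real.cos h) /
      (16 * Real.sin (h / 2) ^ 2 * (2 * Real.cos (h / 2) + Real.cos (3 * h / 2))))
    (ha6 : a6 = -(3 * Real.cos (h / 2) ^ 2) / (2 * Real.sin (h / 2) ^ 2 * (1 + 2 * Real.cos h)))
    (hw1 : w1 = (1 + 2 * α * k + k ^ 2 * θ * β ^ 2) * a1 - k ^ 2 * θ * a5)
    (hw2 : w2 = (1 + 2 * α * k + k ^ 2 * θ * β ^ 2) * a2 - k ^ 2 * θ * a6)
    (hw3 : w3 = (2 + 2 * α * k - (1 - θ) * k ^ 2 * β ^ 2) * a1 + (1 - θ) * k ^ 2 * a5)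
    (hw4 : w4 = (2 + 2 * α * k - (1 - θ) * k ^ 2 * β ^ 2) * a2 + (1 - θ) * k ^ 2 * a6)
    (hk : 0 < k) (hα : 0 ≤ α) (hθl : 1 / 2 ≤ θ)
    (A B C : ℝ → ℝ)
    (hA : A = fun φ => w2 + 2 * w1 * Real.cos φ)
    (hB : B = fun φ => w4 + 2 * w3 * Real.cos φ)
    (hC : C = fun φ => a2 + 2 * a1 * Real.cos φ)
    : ∀ (φ : ℝ) (δ : ℂ),
      (A φ : ℂ) * δ ^ 2 - (B φ : ℂ) * δ + (C φ : ℂ) = 0 → ‖δ‖ ≤ 1 := by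
  intro φ δ hδ
  have hP : 0 < a2 + 2 * a1 * cos φ := by
    rw [ha1, ha2]; exact bspline_value_symbol_pos hh0 hh1 (neg_one_le_cos φ)
  have hQ : a6 + 2 * a5 * cos φ ≤ 0 := by
    rw [ha5, ha6]; exact bspline_second_deriv_symbol_nonpos hh0 hh1 (abs_cos_le_one φ)
  have hR : 0 ≤ β ^ 2 * (a2 + 2 * a1 * cos φ) - (a6 + 2 * a5 * cos φ) := by
    linarith [mul_nonneg (sq_nonneg β) hP.le]
  refine norm_le_one_of_theta_scheme_eq_zero (m := 2 * α * k) (K := k ^ 2) (by positivity) hθl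
    (sq_nonneg k) hP hR ?_
  subst hA hB hC
  rw [hw1, hw2, hw3, hw4] at hδ
  push_cast at hδ ⊢
  linear_combination hδ

theorem stmt_19 (h k α β θ : ℝ) (hh0 : 0 < h) (hh1 : h < 2 * Real.pi / 3)
    (a1 a2 a5 a6 w1 w2 w3 w4 : ℝ)
    (ha1 : a1 = Real.sin (h / 2) ^ 2 / (Real.sin h * Real.sin (3 * h / 2)))
    (ha2 : a2 = 2 / (1 + 2 * Real.cos h))
    (ha5 : a5 = 3 * (1 + 3 * Real.cos h) /
      (16 * Real.sin (h / 2) ^ 2 * (2 * Real.cos (h / 2) + Real.cos (3 * h / 2))))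
    (ha6 : a6 = -(3 * Real.cos (h / 2) ^ 2) / (2 * Real.sin (h / 2) ^ 2 * (1 + 2 * Real.cos h)))
    (hw1 : w1 = (1 + 2 * α * k + k ^ 2 * θ * β ^ 2) * a1 - k ^ 2 * θ * a5)
    (hw2 : w2 = (1 + 2 * α * k + k ^ 2 * θ * β ^ 2) * a2 - k ^ 2 * θ * a6)
    (hw3 : w3 = (2 + 2 * α * k - (1 - θ) * k ^ 2 * β ^ 2) * a1 + (1 - θ) * k ^ 2 * a5)
    (hw4 : w4 = (2 + 2 * α * k - (1 - θ) * k ^ 2 * β ^ 2) * a2 + (1 - θ) * k ^ 2 * a6)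
    (hk : 0 < k) (hα : 0 ≤ α) (hθl : 1 / 2 ≤ θ) (hθu : θ ≤ 1)
    (A B C : ℝ → ℝ)
    (hA : A = fun φ => w2 + 2 * w1 * Real.cos φ)
    (hB : B = fun φ => w4 + 2 * w3 * Real.cos φ)
    (hC : C = fun φ => a2 + 2 * a1 * Real.cos φ)
    : ∀ (φ : ℝ) (δ : ℂ),
      (A φ : ℂ) * δ ^ 2 - (B φ : ℂ) * δ + (C φ : ℂ) = 0 → ‖δ‖ ≤ 1 :=
  stmt_19_general h k α β θ hh0 hh1 a1 a2 a5 a6 w1 w2 w3 w4 ha1 ha2 ha5 ha6 hw1 hw2 hw3 hw4 hk hα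
    hθl A B C hA hB hC
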